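/- arXiv:0903.0216 — 2 statements merged into one kernel-verified Lean document; each statement's English description precedes it below -/
import Mathlib

section
/- In BS(1,p) with p ≥ 2, no geodesic word contains a subword of the form NPNP or PNPN, where a P-block is a nonempty word containing at least one t and no t⁻¹, and an N-block contains at least one t⁻¹ and no t. That is, if a word w contains four consecutive subwords alternating between types N and P (in either order), then there exists a strictly shorter word representing the same element of BS(1,p). -/
/-- The single defining relation of `BS(1,p)`: `t a t⁻¹ a^{-p}`. -/
def BSrel (p : ℕ) : Set (FreeGroup Bool) :=
  {FreeGroup.of true * FreeGroup.of false * (FreeGroup.of true)⁻¹ * (FreeGroup.of false ^ p)⁻¹}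

/-- The solvable Baumslag–Solitar group `BS(1,p) = ⟨a, t | t a t⁻¹ = aᵖ⟩`. -/
abbrev BS (p : ℕ) : Type := PresentedGroup (BSrel p)

/-- The generator `a` of `BS(1,p)`. -/
def gena (p : ℕ) : BS p := PresentedGroup.of false

/-- The generator `t` of `BS(1,p)`. -/
def gent (p : ℕ) : BS p := PresentedGroup.of true

/-- A letter over the alphabet `{a, a⁻¹, t, t⁻¹}`: first component `false` = `a`,
`true` = `t`; second component is the sign (`true` = positive). -/
abbrev Letter : Type := Bool × Bool

/-- Value of a letter in `BS(1,p)`. -/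
def letterVal (p : ℕ) : Letter → BS p
  | (g, s) => (if g then gent p else gena p) ^ (if s then (1 : ℤ) else -1)

/-- The element of `BS(1,p)` represented by a word. -/
def wordVal (p : ℕ) (w : List Letter) : BS p := (w.map (letterVal p)).prod

def tP : Letter := (true, true)
def tN : Letter := (true, false)
def aP : Letter := (false, true)
def aN : Letter := (false, false)

/-- `t`-exponent sum of a word. -/
def texp (w : List Letter) : ℤ := (w.count tP : ℤ) - (w.count tN : ℤ)

/-- A word of type `P`: contains at least one `t` and no `t⁻¹`. -/
def TypeP (w : List Letter) : Prop := tP ∈ w ∧ tN ∉ w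

/-- A word of type `N`: contains at least one `t⁻¹` and no `t`. -/
def TypeN (w : List Letter) : Prop := tN ∈ w ∧ tP ∉ w

/-- The word `a^x` (as a string of `|x|` letters). -/
def aWord (x : ℤ) : List Letter := List.replicate x.natAbs (false, decide (0 < x))

/-- The word `a^{ε₀} t a^{ε₁} t ⋯ t a^{ε_q}`. -/
def stackWord (ε : ℕ → ℤ) (q : ℕ) : List Letter :=
  ((List.range q).map (fun i => aWord (ε i) ++ [tP])).flatten ++ aWord (ε q)

/-- The word `t⁻ᵏ a^{ε₀} t ⋯ t a^{ε_q} t⁻ᵐ`. -/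
def canonWord (k : ℕ) (ε : ℕ → ℤ) (q m : ℕ) : List Letter :=
  List.replicate k tN ++ stackWord ε q ++ List.replicate m tN

/-- `ℤ[1/p]` as an additive subgroup of `ℚ`. -/
def Zp (p : ℕ) : AddSubgroup ℚ := AddSubgroup.closure {x : ℚ | ∃ n : ℕ, x = ((p : ℚ))⁻¹ ^ n}

/-!
The elements `tⁿ a t⁻ⁿ` generate an abelian subgroup of `BS(1,p)` (a copy of `ℤ[1/p]`) that is
stable under conjugation by `t`, and every word of `t`-exponent zero represents an element of it.
Hence for such words `E`, `W` and `τ = t^{±1}` the element `τ E τ⁻¹` commutes with `W`, so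
`τ E τ⁻¹ W τ = W τ E`, which saves two letters. Four alternating blocks always contain such a
pattern: if the second block has at most as many `t`-letters as the third, take the last
`t`-letter of the first block, the first one of the second block and the matching one of the
third; otherwise do the same from the right in the last three blocks.
-/

section Blocks

variable {α : Type*} [BEq α] [LawfulBEq α]

theorem List.exists_eq_append_cons_of_lt_count {a : α} {l : List α} {n : ℕ}
    (h : n < l.count a) : ∃ s t, l = s ++ a :: t ∧ s.count a = n := by
  induction l generalizing n with
  | nil => simp at h
  | cons b l ih =>
    by_cases hb : b = a
    · subst hb
      cases n with
      | zero => exact ⟨[], l, rfl, rfl⟩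
      | succ n =>
        obtain ⟨s, t, rfl, hs⟩ := ih (n := n) (by rw [List.count_cons_self] at h; omega)
        exact ⟨b :: s, t, rfl, by rw [List.count_cons_self, hs]⟩
    · obtain ⟨s, t, rfl, hs⟩ := ih (n := n) (by rwa [List.count_cons_of_ne hb] at h)
      exact ⟨b :: s, t, rfl, by rw [List.count_cons_of_ne hb, hs]⟩

theorem exists_infix_of_three_blocks {c d : α} {y₁ y₂ y₃ : List α}
    (h₁ : c ∈ y₁ ∧ d ∉ y₁) (h₂ : d ∈ y₂ ∧ c ∉ y₂) (h₃ : d ∉ y₃)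
    (hle : y₂.count d ≤ y₃.count c) :
    ∃ E W : List α, E.count c = E.count d ∧ W.count c = W.count d ∧
      c :: E ++ d :: W ++ [c] <:+: y₁ ++ y₂ ++ y₃ := by
  have hcd : c ≠ d := by rintro rfl; exact h₁.2 h₁.1
  obtain ⟨h₁c, h₁d⟩ := h₁
  obtain ⟨h₂d, h₂c⟩ := h₂
  rw [← List.count_pos_iff] at h₁c h₂d
  rw [← List.count_eq_zero] at h₁d h₂c h₃
  obtain ⟨s₁, t₁, rfl, hs₁⟩ :=
    List.exists_eq_append_cons_of_lt_count (Nat.sub_lt h₁c one_pos)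
  obtain ⟨s₂, t₂, rfl, hs₂⟩ := List.exists_eq_append_cons_of_lt_count h₂d
  obtain ⟨s₃, t₃, rfl, hs₃⟩ :=
    List.exists_eq_append_cons_of_lt_count (a := c) (l := y₃)
      (n := (s₂ ++ d :: t₂).count d - 1) (by omega)
  refine ⟨t₁ ++ s₂, t₂ ++ s₃, ?_, ?_, s₁, t₃, by simp⟩ <;>
  simp [List.count_append, hcd, hcd.symm] at h₁d h₂c h₃ hs₁ hs₃ hle ⊢ <;> omega

theorem exists_infix_of_four_blocks {c d : α} {x₁ x₂ x₃ x₄ : List α}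
    (h₁ : c ∈ x₁ ∧ d ∉ x₁) (h₂ : d ∈ x₂ ∧ c ∉ x₂) (h₃ : c ∈ x₃ ∧ d ∉ x₃)
    (h₄ : d ∈ x₄ ∧ c ∉ x₄) :
    ∃ E W : List α, E.count c = E.count d ∧ W.count c = W.count d ∧
      (c :: E ++ d :: W ++ [c] <:+: x₁ ++ x₂ ++ x₃ ++ x₄ ∨
        d :: E ++ c :: W ++ [d] <:+: x₁ ++ x₂ ++ x₃ ++ x₄) := by
  rcases le_total (x₂.count d) (x₃.count c) with hle | hle
  · obtain ⟨E, W, hE, hW, hinf⟩ := exists_infix_of_three_blocks h₁ h₂ h₃.2 hle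
    exact ⟨E, W, hE, hW, .inl (hinf.trans (List.prefix_append _ _).isInfix)⟩
  · obtain ⟨E, W, hE, hW, hinf⟩ :=
      exists_infix_of_three_blocks (y₁ := x₄.reverse) (y₂ := x₃.reverse) (y₃ := x₂.reverse)
        (by simpa using h₄) (by simpa using h₃) (by simpa using h₂.2) (by simpa using hle)
    have hrev : d :: W.reverse ++ c :: E.reverse ++ [d] <:+: x₂ ++ x₃ ++ x₄ :=
      List.reverse_infix.1 (by simpa using hinf)
    exact ⟨W.reverse, E.reverse, by simpa using hW.symm, by simpa using hE.symm,
      .inr (hrev.trans ⟨x₁, [], by simp⟩)⟩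

end Blocks

section BaumslagSolitar

variable {p : ℕ}

theorem gent_mul_gena_mul_inv_gent : gent p * gena p * (gent p)⁻¹ = gena p ^ p := by
  exact PresentedGroup.mk_eq_mk_of_mul_inv_mem (rels := BSrel p)
    (x := .of true * .of false * (.of true)⁻¹) (y := .of false ^ p) rfl

def conjGena (p : ℕ) (n : ℤ) : BS p := gent p ^ n * gena p * gent p ^ (-n)

theorem conjGena_add_one (n : ℤ) : conjGena p (n + 1) = conjGena p n ^ p := by
  rw [conjGena, conjGena, zpow_neg, zpow_neg, conj_pow, ← gent_mul_gena_mul_inv_gent]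
  group

theorem conjGena_add_natCast (n : ℤ) (k : ℕ) : conjGena p (n + k) = conjGena p n ^ p ^ k := by
  induction k with
  | zero => simp
  | succ k ih => rw [Nat.cast_succ, ← add_assoc, conjGena_add_one, ih, ← pow_mul, pow_succ]

theorem commute_conjGena (m n : ℤ) : Commute (conjGena p m) (conjGena p n) := by
  wlog h : m ≤ n generalizing m n
  · exact (this n m (le_of_not_ge h)).symm
  obtain ⟨k, rfl⟩ := Int.exists_add_of_le h
  rw [conjGena_add_natCast]
  exact (Commute.refl _).pow_right _

def baseSubgroup (p : ℕ) : Subgroup (BS p) := Subgroup.closure (Set.range (conjGena p))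

theorem commute_of_mem_baseSubgroup {x y : BS p} (hx : x ∈ baseSubgroup p)
    (hy : y ∈ baseSubgroup p) : Commute x y := by
  have hle := Subgroup.closure_le_centralizer_centralizer (Set.range (conjGena p))
  exact Set.centralizer_centralizer_comm_of_comm
    (by rintro _ ⟨m, rfl⟩ _ ⟨n, rfl⟩; exact commute_conjGena m n) x (hle hx) y (hle hy)

theorem gent_zpow_conj_mem_baseSubgroup {x : BS p} (s : ℤ) (hx : x ∈ baseSubgroup p) :
    gent p ^ s * x * gent p ^ (-s) ∈ baseSubgroup p := by
  suffices baseSubgroup p ≤ (baseSubgroup p).comap (MulAut.conj (gent p ^ s)).toMonoidHom by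
    have hconj := this hx
    rwa [Subgroup.mem_comap, MulEquiv.coe_toMonoidHom, MulAut.conj_apply, ← zpow_neg] at hconj
  refine (Subgroup.closure_le _).2 ?_
  rintro _ ⟨n, rfl⟩
  refine Subgroup.mem_comap.2 (Subgroup.subset_closure ⟨s + n, ?_⟩)
  simp only [MulEquiv.coe_toMonoidHom, MulAut.conj_apply, conjGena]
  group

theorem letterVal_true (s : Bool) :
    letterVal p (true, s) = gent p ^ (if s then (1 : ℤ) else -1) := rfl

theorem wordVal_nil : wordVal p [] = 1 := rfl

theorem wordVal_cons (l : Letter) (u : List Letter) :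
    wordVal p (l :: u) = letterVal p l * wordVal p u := List.prod_cons

theorem wordVal_append (u v : List Letter) :
    wordVal p (u ++ v) = wordVal p u * wordVal p v := by
  simp [wordVal]

theorem wordVal_mul_gent_zpow_neg_texp_mem (u : List Letter) :
    wordVal p u * gent p ^ (-texp u) ∈ baseSubgroup p := by
  induction u with
  | nil => simp [wordVal, texp, one_mem]
  | cons l u ih =>
    obtain ⟨_ | _, s⟩ := l
    · have hgena : gena p ∈ baseSubgroup p := Subgroup.subset_closure ⟨0, by simp [conjGena]⟩
      have htexp : texp ((false, s) :: u) = texp u := by simp [texp, tP, tN]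
      rw [wordVal_cons, htexp, mul_assoc]
      exact mul_mem (zpow_mem hgena _) ih
    · have htexp : texp ((true, s) :: u) = (if s then 1 else -1) + texp u := by
        cases s <;> simp [texp, tP, tN] <;> ring
      convert gent_zpow_conj_mem_baseSubgroup (if s then 1 else -1) ih using 1
      rw [wordVal_cons, htexp, letterVal_true]
      group

theorem texp_eq_zero_iff {u : List Letter} : texp u = 0 ↔ u.count tP = u.count tN := by
  simp [texp, sub_eq_zero]

theorem wordVal_mem_baseSubgroup {u : List Letter} (hu : texp u = 0) :
    wordVal p u ∈ baseSubgroup p := by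
  simpa [hu] using wordVal_mul_gent_zpow_neg_texp_mem (p := p) u

theorem wordVal_swap_conj (s : Bool) {E W : List Letter} (hE : texp E = 0) (hW : texp W = 0) :
    wordVal p ((true, s) :: E ++ (true, !s) :: W ++ [(true, s)]) =
      wordVal p (W ++ (true, s) :: E) := by
  obtain ⟨τ, hτ, hτinv, hcomm⟩ : ∃ τ : BS p, letterVal p (true, s) = τ ∧
      letterVal p (true, !s) = τ⁻¹ ∧ Commute (τ * wordVal p E * τ⁻¹) (wordVal p W) :=
    ⟨_, rfl, by cases s <;> simp [letterVal],
      commute_of_mem_baseSubgroup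
        (by rw [letterVal_true, ← zpow_neg]
            exact gent_zpow_conj_mem_baseSubgroup _ (wordVal_mem_baseSubgroup hE))
        (wordVal_mem_baseSubgroup hW)⟩
  simp only [wordVal_append, wordVal_cons, wordVal_nil, hτ, hτinv, mul_one]
  calc τ * wordVal p E * (τ⁻¹ * wordVal p W) * τ
      = τ * wordVal p E * τ⁻¹ * wordVal p W * τ := by group
    _ = wordVal p W * (τ * wordVal p E * τ⁻¹) * τ := by rw [hcomm.eq]
    _ = wordVal p W * (τ * wordVal p E) := by group

theorem exists_shorter_of_infix {u u' w : List Letter} (hu : u <:+: w)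
    (hval : wordVal p u' = wordVal p u) (hlen : u'.length < u.length) :
    ∃ w', wordVal p w' = wordVal p w ∧ w'.length < w.length := by
  obtain ⟨s, t, rfl⟩ := hu
  exact ⟨s ++ u' ++ t, by simp only [wordVal_append, hval], by simp; omega⟩

end BaumslagSolitar

theorem stmt4_general (p : ℕ) (w w₀ x₁ x₂ x₃ x₄ w₅ : List Letter)
    (hw : w = w₀ ++ x₁ ++ x₂ ++ x₃ ++ x₄ ++ w₅)
    (halt : (TypeN x₁ ∧ TypeP x₂ ∧ TypeN x₃ ∧ TypeP x₄) ∨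
            (TypeP x₁ ∧ TypeN x₂ ∧ TypeP x₃ ∧ TypeN x₄)) :
    ∃ w' : List Letter, wordVal p w' = wordVal p w ∧ w'.length < w.length := by
  obtain ⟨s, E, W, hE, hW, hinfix⟩ : ∃ (s : Bool) (E W : List Letter),
      texp E = 0 ∧ texp W = 0 ∧
        (true, s) :: E ++ (true, !s) :: W ++ [(true, s)] <:+: x₁ ++ x₂ ++ x₃ ++ x₄ := by
    simp only [texp_eq_zero_iff]
    rcases halt with ⟨h₁, h₂, h₃, h₄⟩ | ⟨h₁, h₂, h₃, h₄⟩
    · obtain ⟨E, W, hE, hW, h | h⟩ := exists_infix_of_four_blocks h₁ h₂ h₃ h₄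
      exacts [⟨false, E, W, hE.symm, hW.symm, h⟩, ⟨true, E, W, hE.symm, hW.symm, h⟩]
    · obtain ⟨E, W, hE, hW, h | h⟩ := exists_infix_of_four_blocks h₁ h₂ h₃ h₄
      exacts [⟨true, E, W, hE, hW, h⟩, ⟨false, E, W, hE, hW, h⟩]
  refine exists_shorter_of_infix (hinfix.trans ⟨w₀, w₅, by simp [hw]⟩)
    (wordVal_swap_conj s hE hW).symm ?_
  simp only [List.length_append, List.length_cons, List.length_nil]
  omega

/-- a word containing four consecutive blocks alternating between types
`N` and `P` (in either order) is not geodesic: some strictly shorter word represents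
the same element. -/
theorem stmt4 (p : ℕ) (hp : 2 ≤ p) (w w₀ x₁ x₂ x₃ x₄ w₅ : List Letter)
    (hw : w = w₀ ++ x₁ ++ x₂ ++ x₃ ++ x₄ ++ w₅)
    (halt : (TypeN x₁ ∧ TypeP x₂ ∧ TypeN x₃ ∧ TypeP x₄) ∨
            (TypeP x₁ ∧ TypeN x₂ ∧ TypeP x₃ ∧ TypeN x₄)) :
    ∃ w' : List Letter, wordVal p w' = wordVal p w ∧ w'.length < w.length :=
  stmt4_general p w w₀ x₁ x₂ x₃ x₄ w₅ hw halt
end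

section
/- Every element of BS(1,p) with nonnegative t-exponent sum can be represented by a word of the form t⁻ᵏ a^{ε₀} t a^{ε₁} t ⋯ t a^{ε_q} t⁻ᵐ where k, m, q ≥ 0, q ≥ k + m, |ε_i| < p for 0 ≤ i < q, and |ε_q| < 3p, and moreover such a representative can be chosen with length at most that of any given representing word. -/
/-!
Read the word letter by letter, keeping for the prefix read so far an equal canonical word
`t⁻ᵏ a^{ε₀} t ⋯ t a^{ε_q} t⁻ᵐ` with `k ≤ q`. Its value is `t⁻ᵏ a^E t^{q-m}` with
`E = ∑ εᵢ pⁱ`, so appending `t^{±1}` only changes `m` (or, if `m = 0`, splits the top digit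
`ε_q = r + p ε_{q+1}`), and appending `a^{±1}` adds `±p^{q-m}` to `E`, a digit addition with
carries, as long as `m ≤ q`. If `m > q`, appending `a^{±1}` moves `d = m - q` letters `t⁻¹` to
the front and creates `d` new digits, which costs `2d + 1` letters. This is paid for by letting
the canonical word exceed the prefix by `2 (k - (q - m))` letters (truncated subtractions): that
allowance grows by `2d` in this step and vanishes once the `t`-exponent sum `q - k - m` is
nonnegative.
-/

namespace BS

section Relations

variable {p : ℕ}

theorem gent_mul_gena_mul_inv : gent p * gena p * (gent p)⁻¹ = gena p ^ p :=
  PresentedGroup.mk_eq_mk_of_mul_inv_mem rfl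

theorem gena_zpow_mul (x : ℤ) :
    gena p ^ ((p : ℤ) * x) = gent p * gena p ^ x * (gent p)⁻¹ := by
  rw [zpow_mul, zpow_natCast, ← gent_mul_gena_mul_inv, ← MulAut.conj_apply, ← map_zpow,
    MulAut.conj_apply]

theorem gena_zpow_pow_mul (n : ℕ) (x : ℤ) :
    gena p ^ ((p : ℤ) ^ n * x) = gent p ^ (n : ℤ) * gena p ^ x * gent p ^ (-(n : ℤ)) := by
  induction n with
  | zero => simp
  | succ n ih =>
    rw [pow_succ', mul_assoc, gena_zpow_mul, ih, Nat.cast_succ]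
    group

end Relations

def texpHom (p : ℕ) : BS p →* Multiplicative ℤ :=
  PresentedGroup.toGroup (f := fun b => Multiplicative.ofAdd (if b then 1 else 0)) <| by
    rintro _ rfl
    simp

section TExponent

variable {p : ℕ}

@[simp] theorem texpHom_gent : texpHom p (gent p) = Multiplicative.ofAdd 1 := by
  simp [texpHom, gent, PresentedGroup.toGroup.of]

@[simp] theorem texpHom_gena : texpHom p (gena p) = 1 := by
  simp [texpHom, gena, PresentedGroup.toGroup.of]

theorem texpHom_letterVal (x : Letter) :
    texpHom p (letterVal p x) = Multiplicative.ofAdd (texp [x]) := by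
  obtain ⟨_ | _, _ | _⟩ := x <;> simp [letterVal, texp, tP, tN]

theorem texp_cons (x : Letter) (w : List Letter) : texp (x :: w) = texp [x] + texp w := by
  simp only [texp, List.count_cons, List.count_nil]
  push_cast
  ring

theorem texpHom_wordVal (w : List Letter) :
    texpHom p (wordVal p w) = Multiplicative.ofAdd (texp w) := by
  induction w with
  | nil => rfl
  | cons x w ih =>
    simp only [wordVal, List.map_cons, List.prod_cons, map_mul] at ih ⊢
    rw [ih, texpHom_letterVal, texp_cons x w, ofAdd_add]

end TExponent

/-- `digitsVal p [ε₀, …, ε_{q-1}] ε_q = ∑ εᵢ pⁱ`. -/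
def digitsVal (p : ℕ) : List ℤ → ℤ → ℤ
  | [], top => top
  | e :: L, top => e + p * digitsVal p L top

def digitSum (L : List ℤ) (top : ℤ) : ℕ := (L.map Int.natAbs).sum + top.natAbs

def Admissible (p : ℕ) (L : List ℤ) (top : ℤ) : Prop :=
  (∀ e ∈ L, e.natAbs < p) ∧ top.natAbs < 3 * p

section Digits

variable {p : ℕ}

@[simp] theorem digitsVal_nil (top : ℤ) : digitsVal p [] top = top := rfl

@[simp] theorem digitsVal_cons (e : ℤ) (L : List ℤ) (top : ℤ) :
    digitsVal p (e :: L) top = e + p * digitsVal p L top := rfl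

theorem digitsVal_append_singleton (L : List ℤ) (r top : ℤ) :
    digitsVal p (L ++ [r]) top = digitsVal p L (r + p * top) := by
  induction L with
  | nil => rfl
  | cons e L ih => simp [ih]

theorem digitsVal_replicate_zero_append (j : ℕ) (L : List ℤ) (top : ℤ) :
    digitsVal p (List.replicate j 0 ++ L) top = (p : ℤ) ^ j * digitsVal p L top := by
  induction j with
  | zero => simp
  | succ j ih => simp [List.replicate_succ, ih, pow_succ']; ring

@[simp] theorem digitSum_nil (top : ℤ) : digitSum [] top = top.natAbs := by simp [digitSum]

@[simp] theorem digitSum_cons (e : ℤ) (L : List ℤ) (top : ℤ) :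
    digitSum (e :: L) top = e.natAbs + digitSum L top := by
  simp [digitSum]; ring

theorem exists_eq_mul_of_natAbs_add {N : ℕ} {x c : ℤ} (hx : x.natAbs < N) (hc : c.natAbs ≤ 1)
    (h : ¬ (x + c).natAbs < N) : ∃ s : ℤ, s.natAbs = 1 ∧ x + c = N * s := by
  rcases Int.natAbs_eq (x + c) with h' | h'
  · exact ⟨1, rfl, by omega⟩
  · exact ⟨-1, rfl, by omega⟩

/-- A carry out of the top digit creates a new digit, paid for by the top digit dropping from
`3p ≥ 6` to `3` in absolute value. -/
theorem exists_digitsVal_add (hp : 2 ≤ p) {L : List ℤ} {top : ℤ} (hL : Admissible p L top)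
    {j : ℕ} (hj : j ≤ L.length) {c : ℤ} (hc : c.natAbs ≤ 1) :
    ∃ L' top', Admissible p L' top' ∧ L.length ≤ L'.length ∧
      digitsVal p L' top' = digitsVal p L top + (p : ℤ) ^ j * c ∧
      digitSum L' top' + 2 * L'.length ≤ digitSum L top + 1 + 2 * L.length := by
  induction L generalizing j c with
  | nil =>
    obtain rfl : j = 0 := by simpa using hj
    by_cases hsmall : (top + c).natAbs < 3 * p
    · exact ⟨[], top + c, ⟨by simp, hsmall⟩, le_rfl, by simp,
        by simpa using (Int.natAbs_add_le top c).trans (by omega)⟩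
    · obtain ⟨s, hs, hsum⟩ := exists_eq_mul_of_natAbs_add hL.2 hc hsmall
      refine ⟨[0], 3 * s, ⟨by simp; omega, by simp [Int.natAbs_mul, hs]; omega⟩, by simp,
        by push_cast at hsum; simp; linear_combination -hsum, ?_⟩
      simp [Int.natAbs_mul, hs]
      omega
  | cons e L ih =>
    have he : e.natAbs < p := hL.1 e (by simp)
    have hL' : Admissible p L top := ⟨fun x hx => hL.1 x (by simp [hx]), hL.2⟩
    cases j with
    | zero =>
      by_cases hsmall : (e + c).natAbs < p
      · refine ⟨(e + c) :: L, top, ⟨?_, hL.2⟩, le_rfl, by simp; ring, ?_⟩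
        · simpa [hsmall] using hL'.1
        · have := Int.natAbs_add_le e c
          simp only [digitSum_cons, List.length_cons]
          omega
      · obtain ⟨s, hs, hsum⟩ := exists_eq_mul_of_natAbs_add he hc hsmall
        obtain ⟨L', top', hA, hlen, hval, hcost⟩ := ih hL' (Nat.zero_le _) hs.le
        refine ⟨0 :: L', top', ⟨?_, hA.2⟩, by simpa using hlen, ?_, ?_⟩
        · simpa [show 0 < p by omega] using hA.1
        · simp [hval]; linear_combination -hsum
        · simp only [digitSum_cons, List.length_cons, Int.natAbs_zero] at hcost ⊢
          omega
    | succ j =>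
      obtain ⟨L', top', hA, hlen, hval, hcost⟩ := ih hL' (by simpa using hj) hc
      refine ⟨e :: L', top', ⟨?_, hA.2⟩, by simpa using hlen, by simp [hval]; ring, ?_⟩
      · simpa [he] using hA.1
      · simp only [digitSum_cons, List.length_cons] at hcost ⊢
        omega

theorem exists_split_top (hp : 0 < p) {L : List ℤ} {top : ℤ} (hL : Admissible p L top) :
    ∃ r q, Admissible p (L ++ [r]) q ∧ digitsVal p (L ++ [r]) q = digitsVal p L top ∧
      digitSum (L ++ [r]) q ≤ digitSum L top := by
  have hdiv : top.natAbs / p < 3 := Nat.div_lt_of_lt_mul (by simpa [mul_comm] using hL.2)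
  have hq : (top.tdiv p).natAbs = top.natAbs / p := Int.natAbs_tdiv _ _
  have hr : (top.tmod p).natAbs = top.natAbs % p := Int.natAbs_tmod _ _
  refine ⟨top.tmod p, top.tdiv p, ⟨?_, ?_⟩, ?_, ?_⟩
  · simp only [List.mem_append, List.mem_singleton]
    rintro x (hx | rfl)
    · exact hL.1 x hx
    · simpa [hr] using Nat.mod_lt _ hp
  · omega
  · rw [digitsVal_append_singleton, Int.tmod_add_mul_tdiv]
  · have hsplit := Nat.mod_add_div top.natAbs p
    have hle : top.natAbs / p ≤ p * (top.natAbs / p) := Nat.le_mul_of_pos_left _ hp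
    simp only [digitSum, List.map_append, List.sum_append, List.map_cons, List.map_nil,
      List.sum_cons, List.sum_nil]
    omega

end Digits

section Words

variable {p : ℕ}

@[simp] theorem wordVal_nil : wordVal p [] = 1 := rfl

@[simp] theorem wordVal_append (u v : List Letter) :
    wordVal p (u ++ v) = wordVal p u * wordVal p v := by
  simp [wordVal]

@[simp] theorem wordVal_singleton (x : Letter) : wordVal p [x] = letterVal p x := by
  simp [wordVal]

theorem wordVal_replicate (n : ℕ) (x : Letter) :
    wordVal p (List.replicate n x) = letterVal p x ^ n := by
  simp [wordVal]

@[simp] theorem letterVal_tP : letterVal p tP = gent p := by simp [letterVal, tP]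

@[simp] theorem letterVal_tN : letterVal p tN = (gent p)⁻¹ := by simp [letterVal, tN]

theorem wordVal_replicate_tN (n : ℕ) :
    wordVal p (List.replicate n tN) = gent p ^ (-(n : ℤ)) := by
  rw [wordVal_replicate, letterVal_tN, zpow_neg, zpow_natCast, inv_pow]

theorem wordVal_aWord (x : ℤ) : wordVal p (aWord x) = gena p ^ x := by
  rw [aWord, wordVal_replicate, letterVal, ← zpow_natCast, ← zpow_mul]
  congr 1
  split_ifs with hx <;> simp only [decide_eq_true_eq] at hx
  · simp [abs_of_pos hx]
  · simp [abs_of_nonpos (not_lt.1 hx)]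

def digitWord (L : List ℤ) (top : ℤ) : List Letter :=
  (L.map fun e => aWord e ++ [tP]).flatten ++ aWord top

theorem stackWord_getD (L : List ℤ) (top : ℤ) :
    stackWord (L.getD · top) L.length = digitWord L top := by
  rw [stackWord, digitWord, List.getD_eq_default _ _ le_rfl]
  congr 2
  apply List.ext_getElem (by simp)
  intro i _ h
  simp [List.getElem?_eq_getElem (by simpa using h : i < L.length)]

@[simp] theorem digitWord_cons (e : ℤ) (L : List ℤ) (top : ℤ) :
    digitWord (e :: L) top = aWord e ++ [tP] ++ digitWord L top := by
  simp [digitWord]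

theorem wordVal_digitWord (L : List ℤ) (top : ℤ) :
    wordVal p (digitWord L top) = gena p ^ digitsVal p L top * gent p ^ (L.length : ℤ) := by
  induction L with
  | nil => simp [digitWord, wordVal_aWord]
  | cons e L ih =>
    rw [digitWord_cons, wordVal_append, wordVal_append, ih, wordVal_aWord, wordVal_singleton,
      digitsVal_cons, zpow_add, gena_zpow_mul, List.length_cons, Nat.cast_succ, letterVal_tP]
    group

theorem length_digitWord (L : List ℤ) (top : ℤ) :
    (digitWord L top).length = L.length + digitSum L top := by
  induction L with
  | nil => simp [digitWord, aWord]
  | cons e L ih =>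
    simp only [digitWord_cons, List.length_append, ih, aWord, List.length_replicate,
      List.length_cons, List.length_nil, digitSum_cons]
    ring

end Words

/-- The data `(k, [ε₀, …, ε_{q-1}], ε_q, m)` of the word
`t⁻ᵏ a^{ε₀} t ⋯ t a^{ε_q} t⁻ᵐ`. -/
structure CanonForm where
  k : ℕ
  digits : List ℤ
  top : ℤ
  m : ℕ

namespace CanonForm

variable (f : CanonForm)

def word : List Letter := canonWord f.k (f.digits.getD · f.top) f.digits.length f.m

def val (p : ℕ) : BS p :=
  gent p ^ (-(f.k : ℤ)) * gena p ^ digitsVal p f.digits f.top *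
    gent p ^ ((f.digits.length : ℤ) - f.m)

def Valid (p : ℕ) : Prop := Admissible p f.digits f.top ∧ f.k ≤ f.digits.length

/-- Zero as soon as the `t`-exponent sum `q - k - m` is nonnegative. -/
def deficit : ℕ := f.k - (f.digits.length - f.m)

/-- `f'` is a valid form of `f.val * g` whose word is at most one letter longer, once the change
of the budget `2 * deficit` is credited. -/
def IsStep (p : ℕ) (g : BS p) (f' : CanonForm) : Prop :=
  f'.Valid p ∧ f'.val p = f.val p * g ∧
    f'.word.length + 2 * f.deficit ≤ f.word.length + 1 + 2 * f'.deficit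

variable {p : ℕ}

theorem wordVal_word : wordVal p f.word = f.val p := by
  rw [word, canonWord, stackWord_getD, wordVal_append, wordVal_append, wordVal_replicate_tN,
    wordVal_replicate_tN, wordVal_digitWord, val, sub_eq_add_neg, zpow_add]
  group

theorem length_word :
    f.word.length = f.k + f.m + f.digits.length + digitSum f.digits f.top := by
  rw [word, canonWord, stackWord_getD]
  simp only [List.length_append, List.length_replicate, length_digitWord]
  ring

theorem texpHom_val :
    texpHom p (f.val p) = Multiplicative.ofAdd ((f.digits.length : ℤ) - f.k - f.m) := by
  simp only [val, map_mul, map_zpow, texpHom_gent, texpHom_gena, one_zpow, mul_one,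
    ← ofAdd_zsmul, ← ofAdd_add]
  congr 1
  ring

variable {f}

theorem isStep_gent_inv (hf : f.Valid p) : f.IsStep p (gent p)⁻¹ { f with m := f.m + 1 } := by
  refine ⟨hf, ?_, ?_⟩
  · simp only [val]
    push_cast
    group
  · simp only [length_word, deficit]
    omega

theorem exists_isStep_gent (hp : 2 ≤ p) (hf : f.Valid p) : ∃ f', f.IsStep p (gent p) f' := by
  obtain ⟨k, L, top, m⟩ := f
  cases m with
  | succ m =>
    refine ⟨⟨k, L, top, m⟩, hf, ?_, ?_⟩
    · simp only [val]
      push_cast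
      group
    · simp only [length_word, deficit]
      omega
  | zero =>
    obtain ⟨hL, hk⟩ : Admissible p L top ∧ k ≤ L.length := hf
    obtain ⟨r, q, hA, hval, hsum⟩ := exists_split_top (by omega) hL
    refine ⟨⟨k, L ++ [r], q, 0⟩, ⟨hA, by simp; omega⟩, ?_, ?_⟩
    · simp only [val, hval, List.length_append, List.length_singleton]
      push_cast
      group
    · simp only [length_word, deficit, List.length_append, List.length_singleton]
      omega

theorem exists_isStep_gena_zpow_of_le (hp : 2 ≤ p) (hf : f.Valid p)
    (hm : f.m ≤ f.digits.length) {c : ℤ} (hc : c.natAbs ≤ 1) :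
    ∃ f', f.IsStep p (gena p ^ c) f' := by
  obtain ⟨k, L, top, m⟩ := f
  obtain ⟨hL, hk⟩ : Admissible p L top ∧ k ≤ L.length := hf
  dsimp only at hm
  obtain ⟨L', top', hA, hlen, hval, hsum⟩ :=
    exists_digitsVal_add hp hL (j := L.length - m) (Nat.sub_le _ _) hc
  refine ⟨⟨k, L', top', m + (L'.length - L.length)⟩, ⟨hA, show k ≤ L'.length by omega⟩,
    ?_, ?_⟩
  · have hexp : (L'.length : ℤ) - ((m + (L'.length - L.length) : ℕ) : ℤ) =
        ((L.length - m : ℕ) : ℤ) := by omega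
    simp only [val, hval, hexp, zpow_add, gena_zpow_pow_mul]
    rw [show (L.length : ℤ) - m = ((L.length - m : ℕ) : ℤ) by omega]
    group
  · simp only [length_word, deficit]
    omega

/-- The `d + 1` letters `t⁻¹` at the end move to the front, and `c` becomes the lowest of
`d + 1` new digits. -/
theorem isStep_gena_zpow_of_lt (hp : 2 ≤ p) {k : ℕ} {L : List ℤ} {top : ℤ} {d : ℕ}
    (hf : (⟨k, L, top, L.length + d + 1⟩ : CanonForm).Valid p) {c : ℤ} (hc : c.natAbs ≤ 1) :
    (⟨k, L, top, L.length + d + 1⟩ : CanonForm).IsStep p (gena p ^ c)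
      ⟨k + (d + 1), c :: (List.replicate d 0 ++ L), top, L.length + d + 1⟩ := by
  obtain ⟨hL, hk⟩ : Admissible p L top ∧ k ≤ L.length := hf
  refine ⟨⟨⟨?_, hL.2⟩, by simp; omega⟩, ?_, ?_⟩
  · simp only [List.mem_cons, List.mem_append, List.mem_replicate]
    rintro e (rfl | ⟨-, rfl⟩ | he)
    · omega
    · simp; omega
    · exact hL.1 e he
  · have hval : digitsVal p (c :: (List.replicate d 0 ++ L)) top =
        (p : ℤ) ^ (d + 1) * digitsVal p L top + c := by
      rw [digitsVal_cons, digitsVal_replicate_zero_append, pow_succ']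
      ring
    simp only [val, hval, zpow_add, gena_zpow_pow_mul, List.length_cons, List.length_append,
      List.length_replicate]
    push_cast
    group
  · have hsum : digitSum (c :: (List.replicate d 0 ++ L)) top = c.natAbs + digitSum L top := by
      simp [digitSum]
      ring
    simp only [length_word, deficit, hsum, List.length_cons, List.length_append,
      List.length_replicate]
    omega

theorem exists_isStep_gena_zpow (hp : 2 ≤ p) (hf : f.Valid p) {c : ℤ} (hc : c.natAbs ≤ 1) :
    ∃ f', f.IsStep p (gena p ^ c) f' := by
  rcases le_or_gt f.m f.digits.length with hm | hm
  · exact exists_isStep_gena_zpow_of_le hp hf hm hc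
  · obtain ⟨k, L, top, m⟩ := f
    obtain ⟨d, rfl⟩ : ∃ d, m = L.length + d + 1 :=
      ⟨m - L.length - 1, by dsimp only at hm; omega⟩
    exact ⟨_, isStep_gena_zpow_of_lt hp hf hc⟩

theorem exists_isStep_letterVal (hp : 2 ≤ p) (hf : f.Valid p) (x : Letter) :
    ∃ f', f.IsStep p (letterVal p x) f' := by
  obtain ⟨_ | _, _ | _⟩ := x
  · exact exists_isStep_gena_zpow hp hf (c := -1) le_rfl
  · exact exists_isStep_gena_zpow hp hf (c := 1) le_rfl
  · exact ⟨_, letterVal_tN (p := p) ▸ isStep_gent_inv hf⟩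
  · exact letterVal_tP (p := p) ▸ exists_isStep_gent hp hf

end CanonForm

open CanonForm in
theorem exists_canonForm (hp : 2 ≤ p) (w : List Letter) :
    ∃ f : CanonForm, f.Valid p ∧ f.val p = wordVal p w ∧
      f.word.length ≤ w.length + 2 * f.deficit := by
  induction w using List.reverseRecOn with
  | nil =>
    refine ⟨⟨0, [], 0, 0⟩, ⟨⟨by simp, by simp; omega⟩, le_rfl⟩, by simp [val], ?_⟩
    simp [length_word, digitSum]
  | append_singleton w x ih =>
    obtain ⟨f, hf, hval, hlen⟩ := ih
    obtain ⟨f', hf', hval', hlen'⟩ := exists_isStep_letterVal hp hf x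
    refine ⟨f', hf', by rw [hval', hval, wordVal_append, wordVal_singleton], ?_⟩
    rw [List.length_append, List.length_singleton]
    omega

end BS

/-- every word with nonnegative `t`-exponent sum is represented by a word
`t⁻ᵏ a^{ε₀} t ⋯ t a^{ε_q} t⁻ᵐ` with `q ≥ k + m`, `|ε_i| < p` for `i < q`, `|ε_q| < 3p`,
of length at most that of the given word. -/
theorem stmt8 (p : ℕ) (hp : 2 ≤ p) (w : List Letter) (h : 0 ≤ texp w) :
    ∃ (k m q : ℕ) (ε : ℕ → ℤ), k + m ≤ q ∧
      (∀ i < q, (ε i).natAbs < p) ∧ (ε q).natAbs < 3 * p ∧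
      wordVal p (canonWord k ε q m) = wordVal p w ∧
      (canonWord k ε q m).length ≤ w.length := by
  obtain ⟨f, ⟨⟨hdigits, htop⟩, -⟩, hval, hlen⟩ := BS.exists_canonForm hp w
  have htexp : (f.digits.length : ℤ) - f.k - f.m = texp w := by
    have := congrArg (BS.texpHom p) hval
    rw [f.texpHom_val, BS.texpHom_wordVal] at this
    exact Multiplicative.ofAdd.injective this
  have hdeficit : f.deficit = 0 := by
    simp only [BS.CanonForm.deficit]
    omega
  refine ⟨f.k, f.m, f.digits.length, (f.digits.getD · f.top), by omega, fun i hi => ?_, ?_,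
    by rw [← hval]; exact f.wordVal_word, by rw [hdeficit] at hlen; exact hlen⟩
  · simp only [List.getD_eq_getElem _ _ hi]
    exact hdigits _ (List.getElem_mem hi)
  · simpa only [List.getD_eq_default _ _ le_rfl] using htop
end
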